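/- arXiv:1505.02370 — 2 statements merged into one kernel-verified Lean document; each statement's English description precedes it below -/
import Mathlib

section
/- Let p be a polynomial in ℝ[x₁,…,x_d]. Then the linear span of the set of all dilates {σ_λ p : λ ∈ ℝ^d} equals the linear span of the set of monomials {x^α : α ∈ ℕ^d, the coefficient of x^α in p is nonzero}. In particular, the smallest dilation-invariant linear subspace containing p is spanned by the monomials occurring in p with nonzero coefficient. -/
/-! The dilate `σ_λ p` has coefficients `c_β λ^β`, so it lies in the span of the monomials of
`p`, and that span is dilation invariant. Conversely, if a linear functional `f` kills every
dilate of `p`, then the polynomial `∑_β c_β f(x^β) x^β` vanishes at every `λ`, hence is zero over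
the infinite field, so `f(x^β) = 0` whenever `c_β ≠ 0`: every monomial of `p` lies in the span of
its dilates. -/

open MvPolynomial Submodule

namespace MvPolynomial

variable {σ : Type*}

section CommSemiring

variable {R : Type*} [CommSemiring R]

noncomputable def dilate (lam : σ → R) : MvPolynomial σ R →ₐ[R] MvPolynomial σ R :=
  bind₁ fun i => C (lam i) * X i

def IsDilationInvariant (W : Submodule R (MvPolynomial σ R)) : Prop :=
  ∀ q ∈ W, ∀ lam : σ → R, dilate lam q ∈ W

theorem mem_restrictSupport_support (p : MvPolynomial σ R) : p ∈ restrictSupport R p.support :=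
  (mem_restrictSupport_iff R).2 subset_rfl

theorem dilate_monomial (lam : σ → R) (α : σ →₀ ℕ) (c : R) :
    dilate lam (monomial α c) = (c * eval lam (monomial α 1)) • monomial α 1 := by
  rw [dilate, bind₁_monomial, eval_monomial, one_mul, smul_monomial, smul_eq_mul, mul_one,
    monomial_eq, Finsupp.prod, Finsupp.prod]
  simp only [mul_pow, ← C_pow, Finset.prod_mul_distrib, ← map_prod, C_mul, mul_assoc]

theorem dilate_eq_sum (lam : σ → R) (p : MvPolynomial σ R) :
    dilate lam p = ∑ β ∈ p.support, (coeff β p * eval lam (monomial β 1)) • monomial β 1 := by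
  conv_lhs => rw [p.as_sum, map_sum]
  exact Finset.sum_congr rfl fun β _ => dilate_monomial lam β (coeff β p)

theorem isDilationInvariant_restrictSupport (s : Set (σ →₀ ℕ)) :
    IsDilationInvariant (restrictSupport R s) := by
  intro q hq lam
  rw [dilate_eq_sum]
  exact sum_mem fun β hβ =>
    smul_mem _ _ ((monomial_mem_restrictSupport R).2 (.inl ((mem_restrictSupport_iff R).1 hq hβ)))

end CommSemiring

section Field

variable {K : Type*} [Field K] [Infinite K]

theorem monomial_one_mem_span_range_dilate {p : MvPolynomial σ K} {α : σ →₀ ℕ}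
    (hα : α ∈ p.support) : monomial α 1 ∈ span K (Set.range fun lam => dilate lam p) := by
  by_contra hmem
  obtain ⟨f, hfα, hker⟩ := exists_le_ker_of_notMem hmem
  set P : MvPolynomial σ K := ∑ β ∈ p.support, (coeff β p * f (monomial β 1)) • monomial β 1
  have hP : P = 0 := funext fun lam => by
    have hf : f (dilate lam p) = 0 := hker (subset_span ⟨lam, rfl⟩)
    rw [dilate_eq_sum, map_sum] at hf
    simp only [P, map_sum, smul_eval, map_zero, ← hf, map_smul, smul_eq_mul]
    exact Finset.sum_congr rfl fun β _ => mul_right_comm _ _ _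
  have hcoeff : coeff α P = coeff α p * f (monomial α 1) := by
    classical
    simp only [P, coeff_sum, coeff_smul, coeff_monomial, smul_eq_mul, mul_ite, mul_one, mul_zero]
    rw [Finset.sum_ite_eq', if_pos hα]
  rw [hP, coeff_zero] at hcoeff
  exact mul_ne_zero (mem_support_iff.1 hα) hfα hcoeff.symm

theorem span_range_dilate (p : MvPolynomial σ K) :
    span K (Set.range fun lam => dilate lam p) = restrictSupport K p.support := by
  refine le_antisymm (span_le.2 ?_) ?_
  · rintro _ ⟨lam, rfl⟩
    exact isDilationInvariant_restrictSupport _ p (mem_restrictSupport_support p) lam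
  rw [restrictSupport_eq_span, span_le]
  rintro _ ⟨α, hα, rfl⟩
  exact monomial_one_mem_span_range_dilate hα

theorem sInf_setOf_mem_isDilationInvariant (p : MvPolynomial σ K) :
    sInf {W : Submodule K (MvPolynomial σ K) | p ∈ W ∧ IsDilationInvariant W} =
      restrictSupport K p.support := by
  refine le_antisymm
    (sInf_le ⟨mem_restrictSupport_support p, isDilationInvariant_restrictSupport _⟩) (le_sInf ?_)
  rintro W ⟨hpW, hW⟩
  rw [← span_range_dilate, span_le]
  rintro _ ⟨lam, rfl⟩
  exact hW p hpW lam

end Field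

end MvPolynomial

theorem stmt_2 (d : ℕ) (p : MvPolynomial (Fin d) ℝ) :
    Submodule.span ℝ {q : MvPolynomial (Fin d) ℝ |
        ∃ lam : Fin d → ℝ,
          q = bind₁ (fun i => (C (lam i) : MvPolynomial (Fin d) ℝ) * X i) p} =
      Submodule.span ℝ {q : MvPolynomial (Fin d) ℝ |
        ∃ α : Fin d →₀ ℕ, coeff α p ≠ 0 ∧ q = monomial α (1 : ℝ)} ∧
    sInf {W : Submodule ℝ (MvPolynomial (Fin d) ℝ) | p ∈ W ∧
        ∀ q ∈ W, ∀ lam : Fin d → ℝ,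
          bind₁ (fun i => (C (lam i) : MvPolynomial (Fin d) ℝ) * X i) q ∈ W} =
      Submodule.span ℝ {q : MvPolynomial (Fin d) ℝ |
        ∃ α : Fin d →₀ ℕ, coeff α p ≠ 0 ∧ q = monomial α (1 : ℝ)} := by
  have hdilates : {q : MvPolynomial (Fin d) ℝ | ∃ lam : Fin d → ℝ,
      q = bind₁ (fun i => (C (lam i) : MvPolynomial (Fin d) ℝ) * X i) p} =
      Set.range fun lam => dilate lam p := by
    ext q
    simp only [dilate, Set.mem_ofPred_eq, Set.mem_range, eq_comm]
  have hmonomials : span ℝ {q : MvPolynomial (Fin d) ℝ |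
      ∃ α : Fin d →₀ ℕ, coeff α p ≠ 0 ∧ q = monomial α (1 : ℝ)} = restrictSupport ℝ p.support := by
    rw [restrictSupport_eq_span]
    congr 1
    ext q
    simp only [Set.mem_ofPred_eq, Set.mem_image, Finset.mem_coe, mem_support_iff, eq_comm]
  rw [hdilates, hmonomials]
  exact ⟨span_range_dilate p, sInf_setOf_mem_isDilationInvariant p⟩
end

section
/- Let V be an ℝ-linear subspace of ℝ[x₁,…,x_d] that is both translation invariant and dilation invariant. If the monomial x^β belongs to V and α ∈ ℕ^d satisfies α ≤ β componentwise, then the monomial x^α also belongs to V. That is, the set of multi-indices of monomials contained in V is downward closed under the componentwise partial order. -/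
/-!
Translating `x^β` by `t • eᵢ` gives `∑ₖ tᵏ (βᵢ choose k) x^(β - k eᵢ)`. This lies in `V` for every
`t`, and over an infinite field the coefficients of a polynomial in `t` with values in `V` lie in
`V` themselves (in `M ⧸ V`, every linear functional turns it into a scalar polynomial with
infinitely many roots). Hence any single exponent of a monomial in `V` can be lowered, and lowering
one coordinate at a time reaches every `α ≤ β`.
-/

open MvPolynomial

theorem Submodule.mem_of_forall_sum_pow_smul_mem {K M : Type*} [Field K] [Infinite K]
    [AddCommGroup M] [Module K M] (V : Submodule K M) (v : ℕ → M) (n : ℕ)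
    (h : ∀ t : K, ∑ k ∈ Finset.range n, t ^ k • v k ∈ V) {k : ℕ} (hk : k < n) : v k ∈ V := by
  rw [← Submodule.Quotient.mk_eq_zero, ← Module.forall_dual_apply_eq_zero_iff K]
  intro φ
  set p : Polynomial K := ∑ j ∈ Finset.range n, Polynomial.monomial j (φ (V.mkQ (v j)))
  have hp : p = 0 := Polynomial.funext fun t => by
    have hφ : φ (V.mkQ (∑ j ∈ Finset.range n, t ^ j • v j)) = 0 := by
      rw [Submodule.mkQ_apply, (Submodule.Quotient.mk_eq_zero V).2 (h t), map_zero]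
    simpa [p, Polynomial.eval_finsetSum, mul_comm] using hφ
  simpa [p, Polynomial.finsetSum_coeff, Polynomial.coeff_monomial, hk] using
    congrArg (Polynomial.coeff · k) hp

namespace MvPolynomial

theorem bind₁_X_add_C_single_monomial {σ R : Type*} [CommSemiring R] [DecidableEq σ]
    (i : σ) (t : R) (β : σ →₀ ℕ) :
    bind₁ (fun j => X j + C (Pi.single i t j)) (monomial β (1 : R)) =
      ∑ k ∈ Finset.range (β i + 1), t ^ k • monomial (β - Finsupp.single i k) ((β i).choose k : R) := by
  have hsplit : monomial β (1 : R) = X i ^ β i * monomial (β.erase i) 1 := by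
    rw [X_pow_eq_monomial, monomial_mul, one_mul, Finsupp.single_add_erase]
  have hfix : bind₁ (fun j => X j + C (Pi.single i t j)) (monomial (β.erase i) (1 : R)) =
      monomial (β.erase i) 1 := by
    rw [bind₁_monomial, monomial_eq]
    refine congrArg _ (Finset.prod_congr rfl fun j hj => ?_)
    have hji : j ≠ i := by rintro rfl; simp at hj
    simp [hji]
  rw [hsplit, map_mul, hfix, map_pow, bind₁_X_right, Pi.single_eq_same, add_comm, add_pow,
    Finset.sum_mul]
  refine Finset.sum_congr rfl fun k _ => ?_
  have hexp : Finsupp.single i (β i - k) + β.erase i = β - Finsupp.single i k := by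
    ext j
    rcases eq_or_ne j i with rfl | hji
    · simp
    · simp [hji]
  rw [X_pow_eq_monomial, ← C_pow, ← map_natCast C, C_mul_monomial, mul_assoc, C_mul_monomial,
    monomial_mul, hexp, smul_monomial, smul_eq_mul, mul_one, mul_one]

def IsTranslationInvariant {σ R : Type*} [CommSemiring R] (V : Submodule R (MvPolynomial σ R)) :
    Prop :=
  ∀ p ∈ V, ∀ y : σ → R, bind₁ (fun i => X i + C (y i)) p ∈ V

variable {σ K : Type*} [Field K] [CharZero K] {V : Submodule K (MvPolynomial σ K)}

theorem IsTranslationInvariant.monomial_sub_single_mem (hV : IsTranslationInvariant V)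
    {β : σ →₀ ℕ} (hβ : monomial β (1 : K) ∈ V) (i : σ) {k : ℕ} (hk : k ≤ β i) :
    monomial (β - Finsupp.single i k) (1 : K) ∈ V := by
  classical
  have hchoose : ((β i).choose k : K) ≠ 0 := Nat.cast_ne_zero.mpr (Nat.choose_pos hk).ne'
  have hmem : monomial (β - Finsupp.single i k) ((β i).choose k : K) ∈ V :=
    V.mem_of_forall_sum_pow_smul_mem _ (β i + 1)
      (fun t => bind₁_X_add_C_single_monomial i t β ▸ hV _ hβ (Pi.single i t))
      (Nat.lt_succ_of_le hk)
  simpa [smul_monomial, hchoose] using V.smul_mem ((β i).choose k : K)⁻¹ hmem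

theorem IsTranslationInvariant.monomial_tsub_mem (hV : IsTranslationInvariant V)
    {β γ : σ →₀ ℕ} (hβ : monomial β (1 : K) ∈ V) (hγ : γ ≤ β) :
    monomial (β - γ) (1 : K) ∈ V := by
  induction γ using Finsupp.induction_linear generalizing β with
  | zero => simpa using hβ
  | add f g hf hg =>
    have hfβ : f ≤ β := le_trans (le_add_right le_rfl) hγ
    have hgβ : g ≤ β - f := le_tsub_of_add_le_left hγ
    rw [← tsub_tsub]
    exact hg (hf hβ hfβ) hgβ
  | single i k => exact hV.monomial_sub_single_mem hβ i (Finsupp.single_le_iff.mp hγ)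

theorem IsTranslationInvariant.monomial_mem_of_le (hV : IsTranslationInvariant V)
    {α β : σ →₀ ℕ} (hβ : monomial β (1 : K) ∈ V) (hαβ : α ≤ β) : monomial α (1 : K) ∈ V :=
  tsub_tsub_cancel_of_le hαβ ▸ hV.monomial_tsub_mem hβ tsub_le_self

end MvPolynomial

theorem stmt_6_general (d : ℕ) (V : Submodule ℝ (MvPolynomial (Fin d) ℝ))
    (htrans : ∀ p ∈ V, ∀ y : Fin d → ℝ,
      bind₁ (fun i => (X i : MvPolynomial (Fin d) ℝ) + C (y i)) p ∈ V)
    (β : Fin d →₀ ℕ) (hβ : monomial β (1 : ℝ) ∈ V)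
    (α : Fin d →₀ ℕ) (hαβ : α ≤ β) :
    monomial α (1 : ℝ) ∈ V :=
  IsTranslationInvariant.monomial_mem_of_le htrans hβ hαβ

theorem stmt_6 (d : ℕ) (V : Submodule ℝ (MvPolynomial (Fin d) ℝ))
    (htrans : ∀ p ∈ V, ∀ y : Fin d → ℝ,
      bind₁ (fun i => (X i : MvPolynomial (Fin d) ℝ) + C (y i)) p ∈ V)
    (hdil : ∀ p ∈ V, ∀ y : Fin d → ℝ,
      bind₁ (fun i => (C (y i) : MvPolynomial (Fin d) ℝ) * X i) p ∈ V)
    (β : Fin d →₀ ℕ) (hβ : monomial β (1 : ℝ) ∈ V)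
    (α : Fin d →₀ ℕ) (hαβ : α ≤ β) :
    monomial α (1 : ℝ) ∈ V :=
  stmt_6_general d V htrans β hβ α hαβ
end
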